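/- arXiv:2502.03546 — 10 statements merged into one kernel-verified Lean document; each statement's English description precedes it below -/
import Mathlib

section
/- Let u be a finite normal-form game with at least two players and let p be any strategy profile. Then there exists a game v with the same players and strategy sets such that v preserves all unilateral payoff differences of u (for every player i, all s, t ∈ S_i and every choice r of strategies of the other players, v_i(s; r) − v_i(t; r) = u_i(s; r) − u_i(t; r), so v is strategically equivalent to u) and p is the unique social-welfare maximiser of v: ∑_i v_i(p) > ∑_i v_i(q) for every profile q ≠ p. -/
open Function

/-- For any finite game with at least two players and any profile `p`, there is a
strategically equivalent game (preserving all unilateral payoff differences) in which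
`p` is the unique social-welfare maximiser. -/
theorem exists_strategically_equivalent_game_with_unique_welfare_maximiser
    {N : ℕ} {S : Fin N → Type*} [∀ j, Fintype (S j)] [∀ j, Nonempty (S j)]
    (hN : 2 ≤ N) (u : Fin N → (∀ j, S j) → ℝ) (p : ∀ j, S j) :
    ∃ v : Fin N → (∀ j, S j) → ℝ,
      (∀ (i : Fin N) (s t : S i) (r : ∀ j, S j),
        v i (update r i s) - v i (update r i t) =
          u i (update r i s) - u i (update r i t)) ∧
      (∀ q : ∀ j, S j, q ≠ p → ∑ i, v i q < ∑ i, v i p) := by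
  classical
  set W : (∀ j, S j) → ℝ := fun q => ∑ i, u i q with hW
  have hne : (Finset.univ : Finset (∀ j, S j)).Nonempty := Finset.univ_nonempty
  set M : ℝ := 1 + Finset.univ.sup' hne (fun q => W q - W p) with hM
  have hMq : ∀ q, W q - W p ≤ M - 1 := by
    intro q
    have := Finset.le_sup' (fun q => W q - W p) (Finset.mem_univ q)
    rw [hM]; linarith
  have hM1 : 1 ≤ M := by
    have := hMq p
    simp at this
    linarith
  refine ⟨fun i q => u i q + M * (if ∀ j, j ≠ i → q j = p j then 1 else 0), ?_, ?_⟩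
  · intro i s t r
    have hcond : ∀ x : S i,
        (∀ j, j ≠ i → update r i x j = p j) ↔ (∀ j, j ≠ i → r j = p j) := by
      intro x
      constructor <;> intro h j hj <;> have := h j hj <;>
        simpa [update_of_ne hj] using this
    dsimp only
    rw [if_congr (hcond s) rfl rfl, if_congr (hcond t) rfl rfl]
    ring
  · intro q hq
    have hsum : ∀ q' : ∀ j, S j,
        ∑ i, (u i q' + M * (if ∀ j, j ≠ i → q' j = p j then 1 else 0)) =
          W q' + M * ((Finset.univ.filter (fun i => ∀ j, j ≠ i → q' j = p j)).card : ℝ) := by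
      intro q'
      rw [Finset.sum_add_distrib, ← Finset.mul_sum, Finset.sum_boole]
    rw [hsum q, hsum p]
    have hcp : (Finset.univ.filter (fun i => ∀ j, j ≠ i → p j = p j)).card = N := by
      simp
    have hcq : ((Finset.univ.filter (fun i => ∀ j, j ≠ i → q j = p j)).card : ℕ) ≤ 1 := by
      apply Finset.card_le_one.2
      intro a ha b hb
      by_contra hab
      apply hq
      funext j
      simp only [Finset.mem_filter] at ha hb
      rcases eq_or_ne j a with rfl | hja
      · exact hb.2 j hab
      · exact ha.2 j hja
    have hWq := hMq q
    have h1 : ((Finset.univ.filter (fun i => ∀ j, j ≠ i → q j = p j)).card : ℝ) ≤ 1 := by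
      exact_mod_cast hcq
    have h2 : (2 : ℝ) ≤ (N : ℝ) := by exact_mod_cast hN
    rw [hcp]
    set c : ℝ := ((Finset.univ.filter (fun i => ∀ j, j ≠ i → q j = p j)).card : ℝ)
    nlinarith [mul_le_mul_of_nonneg_left h1 (by linarith : (0:ℝ) ≤ M)]
end

section
/- A strict finite normal-form game admits an ordinal potential if and only if its preference graph is acyclic (contains no directed cycle). -/
/-- Two distinct profiles are `i`-comparable if they differ only in the strategy of player `i`. -/
def IComp {N : ℕ} {S : Fin N → Type*} (i : Fin N) (p q : ∀ j, S j) : Prop :=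
  p ≠ q ∧ ∀ j, j ≠ i → p j = q j

/-- A game is strict if `i`-comparable profiles never give player `i` equal payoff. -/
def StrictGame {N : ℕ} {S : Fin N → Type*} (u : Fin N → (∀ j, S j) → ℝ) : Prop :=
  ∀ i p q, IComp i p q → u i p ≠ u i q

/-- Arc of the preference graph. -/
def PrefArc {N : ℕ} {S : Fin N → Type*} (u : Fin N → (∀ j, S j) → ℝ)
    (p q : ∀ j, S j) : Prop :=
  ∃ i, IComp i p q ∧ u i p < u i q

/-- The relation `A` has a directed cycle: a sequence of `n + 2 ≥ 2` distinct nodes,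
each with an arc to the next, cyclically. -/
def HasCycle {α : Type*} (A : α → α → Prop) : Prop :=
  ∃ (n : ℕ) (f : Fin (n + 2) → α), Function.Injective f ∧ ∀ k, A (f k) (f (k + 1))

/-- An ordinal potential for a game. -/
def IsOrdinalPotential {N : ℕ} {S : Fin N → Type*} (u : Fin N → (∀ j, S j) → ℝ)
    (P : (∀ j, S j) → ℝ) : Prop :=
  ∀ i p q, IComp i p q → (u i p < u i q ↔ P p < P q)

/-!
A potential strictly increases along every arc of the preference graph, so it cannot return to
its starting value around a cycle. Conversely, in an acyclic finite graph the transitive closure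
of the arc relation is irreflexive (a shortest closed walk repeats no vertex, so it is a cycle),
and the number of profiles from which a profile is reachable then strictly increases along arcs;
strictness of the game turns this into an ordinal potential.
-/

open Relation

section Relations

variable {α : Type*} {A : α → α → Prop}

theorem HasCycle.exists_transGen_self (h : HasCycle A) : ∃ x, TransGen A x x := by
  obtain ⟨n, f, -, harc⟩ := h
  have reach : ∀ k : Fin (n + 2), TransGen A (f 0) (f (k + 1)) := by
    intro k
    induction k using Fin.induction with
    | zero => exact .single (harc 0)
    | succ k ih =>
      rw [Fin.coeSucc_eq_succ] at ih
      exact ih.tail (harc k.succ)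
  exact ⟨f 0, by simpa using reach (Fin.last _)⟩

theorem not_hasCycle_of_increasing {β : Type*} [Preorder β] {g : α → β}
    (hg : ∀ x y, A x y → g x < g y) : ¬ HasCycle A := fun h ↦ by
  obtain ⟨x, hx⟩ := h.exists_transGen_self
  have : TransGen (· < ·) (g x) (g x) := hx.lift g hg
  rw [transGen_eq_self] at this
  exact lt_irrefl _ this

theorem Relation.TransGen.exists_walk {x y : α} (h : TransGen A x y) :
    ∃ (m : ℕ) (w : ℕ → α), 0 < m ∧ w 0 = x ∧ w m = y ∧ ∀ k < m, A (w k) (w (k + 1)) := by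
  induction h with
  | @single b hab => exact ⟨1, fun k ↦ if k = 0 then x else b, one_pos, rfl, rfl, by simpa⟩
  | @tail b c _ hbc ih =>
    obtain ⟨m, w, hm, hw0, hwm, hstep⟩ := ih
    refine ⟨m + 1, fun k ↦ if k ≤ m then w k else c, m.succ_pos, by simpa, by simp, ?_⟩
    intro k hk
    obtain hkm | rfl := Nat.lt_or_eq_of_le (Nat.le_of_lt_succ hk)
    · simpa [hkm.le, Nat.succ_le_of_lt hkm] using hstep k hkm
    · simpa [hwm] using hbc

theorem hasCycle_of_injOn_closed_walk {w : ℕ → α} {d : ℕ} (hd : 2 ≤ d)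
    (hstep : ∀ k < d, A (w k) (w (k + 1))) (hclosed : w d = w 0)
    (hinj : Set.InjOn w (Set.Iio d)) : HasCycle A := by
  obtain ⟨n, rfl⟩ := Nat.exists_eq_add_of_le' hd
  refine ⟨n, fun k ↦ w k, fun i j hij ↦ Fin.ext (hinj i.isLt j.isLt hij), fun k ↦ ?_⟩
  change A (w k) (w (k + 1 : Fin (n + 2)))
  rw [Fin.val_add_one]
  split_ifs with hk
  · simpa [hk, hclosed] using hstep (n + 1) (by omega)
  · exact hstep k k.isLt

theorem hasCycle_of_closed_walk (hirr : ∀ x, ¬ A x x) {w : ℕ → α} {d : ℕ} (hd : 0 < d)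
    (hstep : ∀ k < d, A (w k) (w (k + 1))) (hclosed : w d = w 0) : HasCycle A := by
  induction d using Nat.strong_induction_on generalizing w with
  | _ d ih =>
  by_cases hinj : Set.InjOn w (Set.Iio d)
  · refine hasCycle_of_injOn_closed_walk ?_ hstep hclosed hinj
    by_contra! hd2
    obtain rfl : d = 1 := by omega
    exact hirr (w 0) (hclosed ▸ hstep 0 one_pos)
  -- A repeated vertex `w a = w b` cuts out the shorter closed walk `w a, …, w b`.
  have shorter : ∀ a b, a < b → b < d → w a = w b → HasCycle A := fun a b hab hbd heq ↦
    ih (b - a) (by omega) (w := fun k ↦ w (a + k)) (by omega)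
      (fun k hk ↦ hstep (a + k) (by omega)) (by simpa [Nat.add_sub_cancel' hab.le] using heq.symm)
  simp only [Set.InjOn, not_forall] at hinj
  obtain ⟨a, ha, b, hb, heq, hne⟩ := hinj
  rcases Nat.lt_or_gt_of_ne hne with hab | hba
  · exact shorter a b hab hb heq
  · exact shorter b a hba ha heq.symm

theorem hasCycle_of_transGen_self (hirr : ∀ x, ¬ A x x) {x : α} (h : TransGen A x x) :
    HasCycle A := by
  obtain ⟨m, w, hm, hw0, hwm, hstep⟩ := h.exists_walk
  exact hasCycle_of_closed_walk hirr hm hstep (hwm.trans hw0.symm)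

theorem exists_increasing_of_not_transGen_self [Finite α] (h : ∀ x, ¬ TransGen A x x) :
    ∃ g : α → ℝ, ∀ x y, A x y → g x < g y := by
  refine ⟨fun x ↦ {z | TransGen A z x}.ncard, fun x y hxy ↦ ?_⟩
  have hssub : {z | TransGen A z x} ⊂ {z | TransGen A z y} :=
    (Set.ssubset_iff_of_subset fun z hz ↦ TransGen.tail hz hxy).mpr ⟨x, .single hxy, h x⟩
  exact Nat.cast_lt.mpr (Set.ncard_lt_ncard hssub)

end Relations

section Games

variable {N : ℕ} {S : Fin N → Type*} {u : Fin N → (∀ j, S j) → ℝ}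

theorem IComp.symm {i : Fin N} {p q : ∀ j, S j} (h : IComp i p q) : IComp i q p :=
  ⟨h.1.symm, fun j hj ↦ (h.2 j hj).symm⟩

theorem not_prefArc_self (p : ∀ j, S j) : ¬ PrefArc u p p :=
  fun ⟨_, hp, _⟩ ↦ hp.1 rfl

theorem IsOrdinalPotential.lt_of_prefArc {P : (∀ j, S j) → ℝ} (hP : IsOrdinalPotential u P)
    {p q : ∀ j, S j} (h : PrefArc u p q) : P p < P q :=
  let ⟨i, hi, hu⟩ := h
  (hP i p q hi).mp hu

theorem StrictGame.isOrdinalPotential_of_prefArc {P : (∀ j, S j) → ℝ} (hu : StrictGame u)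
    (hP : ∀ p q, PrefArc u p q → P p < P q) : IsOrdinalPotential u P := by
  refine fun i p q hpq ↦ ⟨fun h ↦ hP p q ⟨i, hpq, h⟩, fun h ↦ ?_⟩
  rcases (hu i p q hpq).lt_or_gt with hlt | hgt
  · exact hlt
  · exact absurd (hP q p ⟨i, hpq.symm, hgt⟩) h.not_gt

end Games

theorem ordinal_potential_iff_acyclic_general {N : ℕ} {S : Fin N → Type*}
    [∀ i, Fintype (S i)]
    (u : Fin N → (∀ j, S j) → ℝ) (hu : StrictGame u) :
    (∃ P : (∀ j, S j) → ℝ, IsOrdinalPotential u P) ↔ ¬ HasCycle (PrefArc u) := by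
  constructor
  · rintro ⟨P, hP⟩
    exact not_hasCycle_of_increasing fun _ _ ↦ hP.lt_of_prefArc
  · intro hacyclic
    obtain ⟨P, hP⟩ := exists_increasing_of_not_transGen_self fun p hp ↦
      hacyclic (hasCycle_of_transGen_self not_prefArc_self hp)
    exact ⟨P, hu.isOrdinalPotential_of_prefArc hP⟩

/-- A strict finite game admits an ordinal potential iff its preference graph is acyclic. -/
theorem ordinal_potential_iff_acyclic {N : ℕ} {S : Fin N → Type*}
    [∀ i, Fintype (S i)] [∀ i, Nonempty (S i)]
    (u : Fin N → (∀ j, S j) → ℝ) (hu : StrictGame u) :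
    (∃ P : (∀ j, S j) → ℝ, IsOrdinalPotential u P) ↔ ¬ HasCycle (PrefArc u) :=
  ordinal_potential_iff_acyclic_general u hu
end

section
/- Every strict finite normal-form game that admits an ordinal potential has a pure Nash equilibrium. -/
/-- Pure Nash equilibrium. -/
def IsPNE {N : ℕ} {S : Fin N → Type*} (u : Fin N → (∀ j, S j) → ℝ) (p : ∀ j, S j) : Prop :=
  ∀ i q, IComp i p q → u i q ≤ u i p

theorem IsOrdinalPotential.isPNE_of_forall_le {N : ℕ} {S : Fin N → Type*}
    {u : Fin N → (∀ j, S j) → ℝ} {P : (∀ j, S j) → ℝ} (hP : IsOrdinalPotential u P)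
    {p : ∀ j, S j} (hp : ∀ q, P q ≤ P p) : IsPNE u p := fun i q hpq =>
  not_lt.1 fun hlt => not_lt.2 (hp q) ((hP i p q hpq).1 hlt)

theorem ordinal_potential_game_has_pne_general {N : ℕ} {S : Fin N → Type*}
    [∀ i, Fintype (S i)] [∀ i, Nonempty (S i)]
    (u : Fin N → (∀ j, S j) → ℝ)
    (P : (∀ j, S j) → ℝ) (hP : IsOrdinalPotential u P) :
    ∃ p : ∀ j, S j, IsPNE u p := by
  obtain ⟨p, hp⟩ := Finite.exists_max P
  exact ⟨p, hP.isPNE_of_forall_le hp⟩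

/-- Every strict finite game admitting an ordinal potential has a pure Nash equilibrium. -/
theorem ordinal_potential_game_has_pne {N : ℕ} {S : Fin N → Type*}
    [∀ i, Fintype (S i)] [∀ i, Nonempty (S i)]
    (u : Fin N → (∀ j, S j) → ℝ) (hu : StrictGame u)
    (P : (∀ j, S j) → ℝ) (hP : IsOrdinalPotential u P) :
    ∃ p : ∀ j, S j, IsPNE u p :=
  ordinal_potential_game_has_pne_general u P hP
end

section
/- A strict two-player finite game (u_1, u_2) is preference-equivalent to a zero-sum game — that is, there exists w : Z → ℝ such that the zero-sum game (w, −w) has exactly the same preference graph as (u_1, u_2) — if and only if the reflected game (u_1, −u_2) has an acyclic preference graph. -/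
/-- Profiles differing only in player 1's strategy. -/
def IComp1 {A B : Type*} (p q : A × B) : Prop := p.1 ≠ q.1 ∧ p.2 = q.2

/-- Profiles differing only in player 2's strategy. -/
def IComp2 {A B : Type*} (p q : A × B) : Prop := p.1 = q.1 ∧ p.2 ≠ q.2

/-- A two-player game is strict if comparable profiles never give the deviating player
equal payoff. -/
def Strict2 {A B : Type*} (u1 u2 : A × B → ℝ) : Prop :=
  (∀ p q, IComp1 p q → u1 p ≠ u1 q) ∧ (∀ p q, IComp2 p q → u2 p ≠ u2 q)

/-- Arc of the preference graph of a two-player game. -/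
def Arc2 {A B : Type*} (u1 u2 : A × B → ℝ) (p q : A × B) : Prop :=
  (IComp1 p q ∧ u1 p < u1 q) ∨ (IComp2 p q ∧ u2 p < u2 q)

/-- A two-player game is zero-sum if the utilities sum to zero at every profile. -/
def ZeroSum2 {A B : Type*} (u1 u2 : A × B → ℝ) : Prop := ∀ p, u1 p + u2 p = 0

lemma hasCycle_of_chain {α : Type*} (R : α → α → Prop) (hirr : ∀ a, ¬ R a a) :
    ∀ k, 1 ≤ k → ∀ g : ℕ → α, g 0 = g k → (∀ i < k, R (g i) (g (i+1))) → HasCycle R := by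
  intro k
  induction k using Nat.strong_induction_on with
  | _ k ih =>
  intro hk g hg hstep
  rcases Nat.lt_or_ge k 2 with h2 | h2
  · have hk1 : k = 1 := by omega
    subst hk1
    exact absurd (hg ▸ hstep 0 (by norm_num)) (hirr _)
  · by_cases hinj : ∀ i < k, ∀ j < k, g i = g j → i = j
    · obtain ⟨n, rfl⟩ : ∃ n, k = n + 2 := ⟨k - 2, by omega⟩
      refine ⟨n, fun m => g m.val, ?_, ?_⟩
      · intro i j hgij
        exact Fin.ext (hinj i.val i.isLt j.val j.isLt hgij)
      · intro m
        show R (g m.val) (g (m + 1 : Fin (n+2)).val)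
        by_cases hm : m = Fin.last (n + 1)
        · subst hm
          have h1 : (Fin.last (n+1) + 1 : Fin (n+2)).val = 0 := by
            simp [Fin.last, Fin.add_def]
          rw [h1]
          have := hstep (n+1) (by omega)
          rwa [show n+1+1 = n+2 from rfl, ← hg] at this
        · have h1 : (m + 1 : Fin (n+2)).val = m.val + 1 := by
            rw [Fin.val_add_one]
            simp [hm]
          rw [h1]
          exact hstep m.val m.isLt
    · push_neg at hinj
      obtain ⟨i, hi, j, hj, hgij, hij⟩ := hinj
      obtain ⟨a, b, hab, hbk, hga⟩ : ∃ a b, a < b ∧ b < k ∧ g a = g b := by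
        rcases hij.lt_or_gt with h | h
        · exact ⟨i, j, h, hj, hgij⟩
        · exact ⟨j, i, h, hi, hgij.symm⟩
      refine ih (b - a) (by omega) (by omega) (fun m => g (a + m)) ?_ ?_
      · simpa [Nat.add_sub_cancel' hab.le] using hga
      · intro m hm
        show R (g (a + m)) (g (a + (m + 1)))
        rw [show a + (m+1) = a + m + 1 by omega]
        exact hstep (a + m) (by omega)

lemma transGen_chain {α : Type*} (R : α → α → Prop) {a b : α} (h : Relation.TransGen R a b) :
    ∃ (k : ℕ) (g : ℕ → α), 1 ≤ k ∧ g 0 = a ∧ g k = b ∧ ∀ i < k, R (g i) (g (i+1)) := by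
  induction h with
  | @single c hab =>
      refine ⟨1, fun i => if i = 0 then a else c, le_refl 1, by simp, by simp, ?_⟩
      intro i hi
      have : i = 0 := by omega
      subst this; simpa using hab
  | @tail b c h hbc ih =>
      obtain ⟨k, g, hk, h0, hk', hstep⟩ := ih
      refine ⟨k + 1, fun i => if i = k + 1 then c else g i, by omega, ?_, by simp, ?_⟩
      · simpa [show ¬ (0 = k+1) by omega] using h0
      · intro i hi
        show R (if i = k+1 then c else g i) (if i+1 = k+1 then c else g (i+1))
        rcases Nat.lt_or_ge i k with hik | hik
        · rw [if_neg (by omega), if_neg (by omega)]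
          exact hstep i hik
        · have : i = k := by omega
          subst this
          rw [if_neg (by omega), if_pos rfl, hk']
          exact hbc
lemma exists_rank {α : Type*} [Fintype α] (R : α → α → Prop)
    (hirr : ∀ a, ¬ R a a) (hac : ¬ HasCycle R) :
    ∃ w : α → ℝ, ∀ p q, R p q → w p < w q := by
  classical
  have hT : ∀ a, ¬ Relation.TransGen R a a := by
    intro a ha
    obtain ⟨k, g, hk, h0, hk', hstep⟩ := transGen_chain R ha
    exact hac (hasCycle_of_chain R hirr k hk g (h0.trans hk'.symm) hstep)
  refine ⟨fun p => ((Finset.univ.filter (fun x => Relation.TransGen R x p)).card : ℝ), ?_⟩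
  intro p q hpq
  have hsub : Finset.univ.filter (fun x => Relation.TransGen R x p) ⊂
      Finset.univ.filter (fun x => Relation.TransGen R x q) := by
    refine ⟨fun x hx => ?_, fun hcon => ?_⟩
    · simp only [Finset.mem_filter, Finset.mem_univ, true_and] at hx ⊢
      exact hx.tail hpq
    · have hp : p ∈ Finset.univ.filter (fun x => Relation.TransGen R x q) := by
        simp only [Finset.mem_filter, Finset.mem_univ, true_and]
        exact Relation.TransGen.single hpq
      have := hcon hp
      simp only [Finset.mem_filter, Finset.mem_univ, true_and] at this
      exact hT p this
  show ((Finset.univ.filter (fun x => Relation.TransGen R x p)).card : ℝ) <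
      ((Finset.univ.filter (fun x => Relation.TransGen R x q)).card : ℝ)
  exact_mod_cast Finset.card_lt_card hsub


/-- A strict two-player finite game is preference-equivalent to a zero-sum game iff the
reflected game `(u1, -u2)` has an acyclic preference graph. -/
theorem pref_equiv_zero_sum_iff_reflection_acyclic {A B : Type*}
    [Fintype A] [Fintype B] [Nonempty A] [Nonempty B]
    (u1 u2 : A × B → ℝ) (hs : Strict2 u1 u2) :
    (∃ w : A × B → ℝ, Strict2 w (fun p => -w p) ∧
        ∀ p q, Arc2 w (fun p => -w p) p q ↔ Arc2 u1 u2 p q) ↔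
      ¬ HasCycle (Arc2 u1 (fun p => -u2 p)) := by
  constructor
  · rintro ⟨w, hws, hwa⟩ ⟨n, f, hfinj, hf⟩
    -- w strictly increases along arcs of the reflected game
    have key : ∀ p q, Arc2 u1 (fun p => -u2 p) p q → w p < w q := by
      rintro p q (⟨h1, hlt⟩ | ⟨h2, hlt⟩)
      · rcases (hwa p q).2 (Or.inl ⟨h1, hlt⟩) with ⟨_, h⟩ | ⟨h2', _⟩
        · exact h
        · exact absurd h2'.1 h1.1
      · have hu2 : u2 q < u2 p := by simpa using hlt
        rcases (hwa q p).2 (Or.inr ⟨⟨h2.1.symm, h2.2.symm⟩, hu2⟩) with ⟨h1', _⟩ | ⟨_, h⟩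
        · exact absurd h2.1.symm h1'.1
        · simpa using h
    open Fin.NatCast in
    have mono : ∀ m : ℕ, w (f 0) < w (f ((m : Fin (n+2)) + 1)) := by
      intro m
      induction m with
      | zero => simpa using key _ _ (hf 0)
      | succ m ih =>
          have hcast : ((m + 1 : ℕ) : Fin (n+2)) + 1 = ((m : ℕ) : Fin (n+2)) + 1 + 1 := by
            push_cast; ring
          rw [hcast]
          exact ih.trans (key _ _ (hf _))
    open Fin.NatCast in
    have h0 : ((n + 1 : ℕ) : Fin (n + 2)) + 1 = 0 := by
      rw [show ((n+1 : ℕ) : Fin (n+2)) + 1 = ((n+2 : ℕ) : Fin (n+2)) by push_cast; grind]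
      exact Fin.natCast_self (n+2)
    have := mono (n + 1)
    rw [h0] at this
    exact lt_irrefl _ this
  · intro hac
    have hirr : ∀ p, ¬ Arc2 u1 (fun p => -u2 p) p p := by
      rintro p (⟨h1, _⟩ | ⟨h2, _⟩)
      · exact h1.1 rfl
      · exact h2.2 rfl
    obtain ⟨w, hw⟩ := exists_rank (Arc2 u1 (fun p => -u2 p)) hirr hac
    -- arcs of reflected game follow w
    have key : ∀ p q, Arc2 u1 (fun p => -u2 p) p q → w p < w q := hw
    refine ⟨w, ⟨?_, ?_⟩, ?_⟩
    · intro p q h1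
      rcases (hs.1 p q h1).lt_or_gt with h | h
      · exact (key p q (Or.inl ⟨h1, h⟩)).ne
      · exact (key q p (Or.inl ⟨⟨h1.1.symm, h1.2.symm⟩, h⟩)).ne'
    · intro p q h2
      rcases (hs.2 p q h2).lt_or_gt with h | h
      · have : w q < w p := key q p (Or.inr ⟨⟨h2.1.symm, h2.2.symm⟩, by simpa using h⟩)
        simp only [ne_eq, neg_inj]
        exact this.ne'
      · have : w p < w q := key p q (Or.inr ⟨h2, by simpa using h⟩)
        simp only [ne_eq, neg_inj]
        exact this.ne
    · intro p q
      constructor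
      · rintro (⟨h1, hlt⟩ | ⟨h2, hlt⟩)
        · refine Or.inl ⟨h1, ?_⟩
          rcases (hs.1 p q h1).lt_or_gt with h | h
          · exact h
          · exact absurd (key q p (Or.inl ⟨⟨h1.1.symm, h1.2.symm⟩, h⟩)) (asymm hlt)
        · refine Or.inr ⟨h2, ?_⟩
          have hwqp : w q < w p := by simpa using hlt
          rcases (hs.2 p q h2).lt_or_gt with h | h
          · exact h
          · exact absurd (key p q (Or.inr ⟨h2, by simpa using h⟩)) (asymm hwqp)
      · rintro (⟨h1, hlt⟩ | ⟨h2, hlt⟩)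
        · exact Or.inl ⟨h1, key p q (Or.inl ⟨h1, hlt⟩)⟩
        · refine Or.inr ⟨h2, ?_⟩
          have : w q < w p :=
            key q p (Or.inr ⟨⟨h2.1.symm, h2.2.symm⟩, by simpa using hlt⟩)
          simpa using this
end

section
/- The preference graph of any strict two-player zero-sum finite game has exactly one sink equilibrium. -/
/-- A sink equilibrium of a directed graph (given by its arc relation `A`): a nonempty
set of nodes that is closed under arcs and in which every node can reach every other
by a directed path.  (Such a set is exactly a strongly connected component with no
outgoing arcs.) -/
def IsSinkEqG {α : Type*} (A : α → α → Prop) (C : Set α) : Prop :=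
  C.Nonempty ∧ (∀ p ∈ C, ∀ q, A p q → q ∈ C) ∧
    ∀ p ∈ C, ∀ q ∈ C, Relation.ReflTransGen A p q

/-!
Let `b₀` be a strategy of player 2 minimising player 1's best-response payoff, and let `z` be
player 1's best response to `b₀`. From any profile `(a, b)`, player 1 first moves to a best
response to `b`; player 2 then switches to `b₀`, which cannot raise `u1` by the choice of `b₀`
and so, by strictness and zero-sum, is an improvement for player 2; finally player 1 moves to
`z`. Hence `z` is reachable from every profile, and in any directed graph with such a node the
unique sink equilibrium is the set of nodes reachable from it.
-/

open Relation

theorem IsSinkEqG.mem_of_reflTransGen {α : Type*} {r : α → α → Prop} {C : Set α}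
    (hC : IsSinkEqG r C) {p q : α} (hp : p ∈ C) (hpq : ReflTransGen r p q) : q ∈ C := by
  induction hpq with
  | refl => exact hp
  | tail _ hqr ih => exact hC.2.1 _ ih _ hqr

theorem existsUnique_isSinkEqG_of_forall_reflTransGen {α : Type*} {r : α → α → Prop} {z : α}
    (hz : ∀ p, ReflTransGen r p z) : ∃! C, IsSinkEqG r C := by
  refine ⟨{q | ReflTransGen r z q},
    ⟨⟨z, .refl⟩, fun _ hp _ hpq => hp.tail hpq, fun p _ _ hq => (hz p).trans hq⟩, ?_⟩
  intro C hC
  obtain ⟨c, hc⟩ := hC.1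
  have hzC : z ∈ C := hC.mem_of_reflTransGen hc (hz c)
  ext q
  exact ⟨hC.2.2 z hzC q, hC.mem_of_reflTransGen hzC⟩

section Game

variable {A B : Type*} {u1 u2 : A × B → ℝ}

theorem reflTransGen_arc2_of_snd_eq (hs : Strict2 u1 u2) {p q : A × B} (h2 : p.2 = q.2)
    (hle : u1 p ≤ u1 q) : ReflTransGen (Arc2 u1 u2) p q := by
  rcases eq_or_ne p.1 q.1 with h1 | h1
  · rw [Prod.ext h1 h2]
  · exact .single (.inl ⟨⟨h1, h2⟩, hle.lt_of_ne (hs.1 p q ⟨h1, h2⟩)⟩)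

theorem reflTransGen_arc2_of_fst_eq (hz : ZeroSum2 u1 u2) (hs : Strict2 u1 u2) {p q : A × B}
    (h1 : p.1 = q.1) (hle : u1 q ≤ u1 p) : ReflTransGen (Arc2 u1 u2) p q := by
  rcases eq_or_ne p.2 q.2 with h2 | h2
  · rw [Prod.ext h1 h2]
  · have hlt : u1 q < u1 p :=
      hle.lt_of_ne fun h => hs.2 p q ⟨h1, h2⟩ (by linarith [hz p, hz q])
    exact .single (.inr ⟨⟨h1, h2⟩, by linarith [hz p, hz q]⟩)

theorem exists_forall_reflTransGen_arc2 [Finite A] [Finite B] [Nonempty A] [Nonempty B]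
    (hz : ZeroSum2 u1 u2) (hs : Strict2 u1 u2) :
    ∃ z, ∀ p, ReflTransGen (Arc2 u1 u2) p z := by
  choose br hbr using fun b : B => Finite.exists_max fun a : A => u1 (a, b)
  obtain ⟨b₀, hb₀⟩ := Finite.exists_min fun b => u1 (br b, b)
  refine ⟨(br b₀, b₀), fun ⟨a, b⟩ => ?_⟩
  have to_best_response : ReflTransGen (Arc2 u1 u2) (a, b) (br b, b) :=
    reflTransGen_arc2_of_snd_eq hs rfl (hbr b a)
  have to_b₀ : ReflTransGen (Arc2 u1 u2) (br b, b) (br b, b₀) :=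
    reflTransGen_arc2_of_fst_eq hz hs rfl ((hbr b₀ (br b)).trans (hb₀ b))
  have to_z : ReflTransGen (Arc2 u1 u2) (br b, b₀) (br b₀, b₀) :=
    reflTransGen_arc2_of_snd_eq hs rfl (hbr b₀ (br b))
  exact to_best_response.trans (to_b₀.trans to_z)

end Game

/-- The preference graph of a strict two-player zero-sum finite game has exactly one
sink equilibrium. -/
theorem zero_sum_unique_sink_equilibrium {A B : Type*}
    [Fintype A] [Fintype B] [Nonempty A] [Nonempty B]
    (u1 u2 : A × B → ℝ) (hz : ZeroSum2 u1 u2) (hs : Strict2 u1 u2) :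
    ∃! C : Set (A × B), IsSinkEqG (Arc2 u1 u2) C := by
  obtain ⟨z, hreach⟩ := exists_forall_reflTransGen_arc2 hz hs
  exact existsUnique_isSinkEqG_of_forall_reflTransGen hreach
end

section
/- A strict two-player zero-sum finite game has at most one pure Nash equilibrium. -/
/-- Pure Nash equilibrium of a two-player game. -/
def IsPNE2 {A B : Type*} (u1 u2 : A × B → ℝ) (p : A × B) : Prop :=
  (∀ q, IComp1 p q → u1 q ≤ u1 p) ∧ (∀ q, IComp2 p q → u2 q ≤ u2 p)


/-! In a zero-sum game a pure Nash equilibrium `p` is a saddle point of `u1`: it is maximal in its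
column and minimal in its row. For two saddle points `(a, b)` and `(c, d)` this gives the cycle
`u1 (a, b) ≤ u1 (a, d) ≤ u1 (c, d) ≤ u1 (c, b) ≤ u1 (a, b)`, so `(c, b)` and `(a, d)` have the
same payoffs as `(a, b)`; strictness then forces `c = a` and `d = b`. -/

section

variable {A B : Type*} {u1 u2 : A × B → ℝ}

theorem ZeroSum2.u2_eq_neg (hz : ZeroSum2 u1 u2) (p : A × B) : u2 p = -u1 p := by
  linarith [hz p]

theorem IsPNE2.u1_le {p : A × B} (hp : IsPNE2 u1 u2 p) (a : A) :
    u1 (a, p.2) ≤ u1 p := by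
  by_cases ha : a = p.1
  · rw [ha]
  · exact hp.1 (a, p.2) ⟨Ne.symm ha, rfl⟩

theorem IsPNE2.le_u1 {p : A × B} (hp : IsPNE2 u1 u2 p) (hz : ZeroSum2 u1 u2) (b : B) :
    u1 p ≤ u1 (p.1, b) := by
  by_cases hb : b = p.2
  · rw [hb]
  · have := hp.2 (p.1, b) ⟨rfl, Ne.symm hb⟩
    rw [hz.u2_eq_neg, hz.u2_eq_neg] at this
    linarith

theorem IsPNE2.u1_interchange {p q : A × B} (hp : IsPNE2 u1 u2 p) (hq : IsPNE2 u1 u2 q)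
    (hz : ZeroSum2 u1 u2) :
    u1 (q.1, p.2) = u1 p ∧ u1 (p.1, q.2) = u1 p := by
  have h₁ := hp.u1_le q.1
  have h₂ := hp.le_u1 hz q.2
  have h₃ := hq.u1_le p.1
  have h₄ := hq.le_u1 hz p.2
  constructor <;> linarith

end

theorem zero_sum_at_most_one_pne_general {A B : Type*}
    (u1 u2 : A × B → ℝ) (hz : ZeroSum2 u1 u2) (hs : Strict2 u1 u2) :
    ∀ p q : A × B, IsPNE2 u1 u2 p → IsPNE2 u1 u2 q → p = q := by
  intro p q hp hq
  obtain ⟨hcol, hrow⟩ := hp.u1_interchange hq hz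
  ext
  · by_contra hne
    exact hs.1 p (q.1, p.2) ⟨hne, rfl⟩ hcol.symm
  · by_contra hne
    refine hs.2 p (p.1, q.2) ⟨rfl, hne⟩ ?_
    rw [hz.u2_eq_neg, hz.u2_eq_neg, hrow]

/-- A strict two-player zero-sum finite game has at most one pure Nash equilibrium. -/
theorem zero_sum_at_most_one_pne {A B : Type*}
    [Fintype A] [Fintype B] [Nonempty A] [Nonempty B]
    (u1 u2 : A × B → ℝ) (hz : ZeroSum2 u1 u2) (hs : Strict2 u1 u2) :
    ∀ p q : A × B, IsPNE2 u1 u2 p → IsPNE2 u1 u2 q → p = q :=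
  zero_sum_at_most_one_pne_general u1 u2 hz hs
end

section
/- Let G be a strict two-player finite game such that every 2×2 subgame of G is dominance-solvable (equivalently, in every 2×2 subgame some strategy is strictly dominated within that subgame). Then G is dominance-solvable. -/
/-- One step of iterated deletion: from the subgame `T` delete a single strategy of one
player that is strictly dominated within `T`, obtaining the subgame `T'`. -/
def DeletionStep {A B : Type*} [DecidableEq A] [DecidableEq B] (u1 u2 : A × B → ℝ)
    (T T' : Finset A × Finset B) : Prop :=
  (∃ t ∈ T.1, (∃ s ∈ T.1, ∀ r ∈ T.2, u1 (t, r) < u1 (s, r)) ∧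
      T'.1 = T.1.erase t ∧ T'.2 = T.2) ∨
  (∃ t ∈ T.2, (∃ s ∈ T.2, ∀ r ∈ T.1, u2 (r, t) < u2 (r, s)) ∧
      T'.1 = T.1 ∧ T'.2 = T.2.erase t)

/-- A two-player finite game is dominance-solvable if some finite sequence of single
deletions of strictly dominated strategies, starting from the full game, ends in a
subgame with exactly one profile. -/
def DominanceSolvable {A B : Type*} [Fintype A] [Fintype B] [DecidableEq A] [DecidableEq B]
    (u1 u2 : A × B → ℝ) : Prop :=
  ∃ T : Finset A × Finset B,
    Relation.ReflTransGen (DeletionStep u1 u2) (Finset.univ, Finset.univ) T ∧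
      T.1.card = 1 ∧ T.2.card = 1

/-!
The 2×2 condition says: when player 1's ranking of two rows flips between two columns, player 2
ranks those two columns the same way in both rows, and symmetrically with the players exchanged.
Consequently, if `br c` is player 1's best reply to the column `c`, the relation "against `br c`,
player 2 prefers `e` to `c`" is a strict order on columns; a maximal column `M` gives the strict
pure Nash equilibrium `(br M, M)`. At such an equilibrium `(a, d)` either the row worst against `d`
is dominated by `a`, or the column worst against `a` is dominated by `d`. Deleting it keeps the
2×2 condition, so iterating solves the game.
-/

open Finset Relation

theorem Finset.exists_forall_not_rel {α : Type*} (r : α → α → Prop) [IsStrictOrder α r]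
    {s : Finset α} (hs : s.Nonempty) : ∃ m ∈ s, ∀ x ∈ s, ¬ r m x := by
  let := partialOrderOfSO r
  obtain ⟨m, hm⟩ := s.exists_maximal hs
  exact ⟨m, hm.prop, fun _ hx => hm.not_gt hx⟩

section

variable {A B : Type*} {u1 u2 : A × B → ℝ}

def DominanceSolvable2x2 (u1 u2 : A × B → ℝ) : Prop :=
  ∀ a b : A, ∀ c d : B, a ≠ b → c ≠ d →
    (u1 (a, c) < u1 (b, c) ∧ u1 (a, d) < u1 (b, d)) ∨
    (u1 (b, c) < u1 (a, c) ∧ u1 (b, d) < u1 (a, d)) ∨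
    (u2 (a, c) < u2 (a, d) ∧ u2 (b, c) < u2 (b, d)) ∨
    (u2 (a, d) < u2 (a, c) ∧ u2 (b, d) < u2 (b, c))

structure IsStrictNash (u1 u2 : A × B → ℝ) (T1 : Finset A) (T2 : Finset B) (a : A) (d : B) :
    Prop where
  row_lt : ∀ x ∈ T1, x ≠ a → u1 (x, d) < u1 (a, d)
  col_lt : ∀ y ∈ T2, y ≠ d → u2 (a, y) < u2 (a, d)

namespace Strict2

variable (hs : Strict2 u1 u2)
include hs

theorem u1_ne {x x' : A} (h : x ≠ x') (y : B) : u1 (x, y) ≠ u1 (x', y) :=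
  hs.1 _ _ ⟨h, rfl⟩

theorem u2_ne (x : A) {y y' : B} (h : y ≠ y') : u2 (x, y) ≠ u2 (x, y') :=
  hs.2 _ _ ⟨rfl, h⟩

theorem exists_best_row {T1 : Finset A} (h1 : T1.Nonempty) (d : B) :
    ∃ a ∈ T1, ∀ x ∈ T1, x ≠ a → u1 (x, d) < u1 (a, d) := by
  obtain ⟨a, ha, hmax⟩ := T1.exists_max_image (fun x => u1 (x, d)) h1
  exact ⟨a, ha, fun x hx hxa => (hmax x hx).lt_of_ne (hs.u1_ne hxa d)⟩

theorem exists_worst_row {T1 : Finset A} (h1 : T1.Nonempty) (d : B) :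
    ∃ b ∈ T1, ∀ x ∈ T1, x ≠ b → u1 (b, d) < u1 (x, d) := by
  obtain ⟨b, hb, hmin⟩ := T1.exists_min_image (fun x => u1 (x, d)) h1
  exact ⟨b, hb, fun x hx hxb => (hmin x hx).lt_of_ne (hs.u1_ne hxb d).symm⟩

theorem exists_worst_col {T2 : Finset B} (h2 : T2.Nonempty) (a : A) :
    ∃ e ∈ T2, ∀ y ∈ T2, y ≠ e → u2 (a, e) < u2 (a, y) := by
  obtain ⟨e, he, hmin⟩ := T2.exists_min_image (fun y => u2 (a, y)) h2
  exact ⟨e, he, fun y hy hye => (hmin y hy).lt_of_ne (hs.u2_ne a hye).symm⟩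

end Strict2

namespace DominanceSolvable2x2

variable (h : DominanceSolvable2x2 u1 u2)
include h

theorem u1_lt_iff_of_u2_cross {r s : A} {p q : B}
    (hrq : u2 (r, p) < u2 (r, q)) (hsp : u2 (s, q) < u2 (s, p)) :
    u1 (r, p) < u1 (s, p) ↔ u1 (r, q) < u1 (s, q) := by
  have hrs : r ≠ s := by rintro rfl; exact lt_asymm hrq hsp
  have hpq : p ≠ q := by rintro rfl; exact lt_irrefl _ hrq
  obtain ⟨h₁, h₂⟩ | ⟨h₁, h₂⟩ | ⟨h₁, h₂⟩ | ⟨h₁, h₂⟩ := h r s p q hrs hpq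
  all_goals constructor <;> intro <;> linarith

theorem u2_lt_iff_of_u1_cross {r s : A} {p q : B}
    (hp : u1 (r, p) < u1 (s, p)) (hq : u1 (s, q) < u1 (r, q)) :
    u2 (r, p) < u2 (r, q) ↔ u2 (s, p) < u2 (s, q) := by
  have hrs : r ≠ s := by rintro rfl; exact lt_irrefl _ hp
  have hpq : p ≠ q := by rintro rfl; exact lt_asymm hp hq
  obtain ⟨h₁, h₂⟩ | ⟨h₁, h₂⟩ | ⟨h₁, h₂⟩ | ⟨h₁, h₂⟩ := h r s p q hrs hpq
  all_goals constructor <;> intro <;> linarith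

section BestReply

variable {T1 : Finset A} {br : B → A} (hbr_mem : ∀ d, br d ∈ T1)
  (hbr : ∀ d, ∀ x ∈ T1, x ≠ br d → u1 (x, d) < u1 (br d, d))
include hbr_mem hbr

theorem u2_lt_of_bestReply {c e : B} (hce : u2 (br c, c) < u2 (br c, e)) :
    u2 (br e, c) < u2 (br e, e) := by
  by_cases hbr_eq : br e = br c
  · rwa [hbr_eq]
  exact (h.u2_lt_iff_of_u1_cross (hbr c _ (hbr_mem e) hbr_eq)
    (hbr e _ (hbr_mem c) (Ne.symm hbr_eq))).mpr hce

theorem bestReply_trans (hs : Strict2 u1 u2) {c e f : B}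
    (hce : u2 (br c, c) < u2 (br c, e)) (hef : u2 (br e, e) < u2 (br e, f)) :
    u2 (br c, c) < u2 (br c, f) := by
  have hce' := h.u2_lt_of_bestReply hbr_mem hbr hce
  by_contra hcf
  have hfc : u2 (br c, f) < u2 (br c, c) := by
    have hcf_ne : c ≠ f := by rintro rfl; exact lt_asymm hce' hef
    exact (hs.u2_ne _ hcf_ne).lt_or_gt.resolve_left hcf
  have hne : br c ≠ br e := by intro hbr_eq; rw [hbr_eq] at hfc hce; linarith
  -- In row `br c` the order is `f < c < e`, in row `br e` it is `c < e < f`.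
  have hcross_fc := h.u1_lt_iff_of_u2_cross hfc (hce'.trans hef)
  have hcross_fe := h.u1_lt_iff_of_u2_cross (hfc.trans hce) hef
  exact lt_asymm (hcross_fc.mp (hcross_fe.mpr (hbr e _ (hbr_mem c) hne)))
    (hbr c _ (hbr_mem e) hne.symm)

end BestReply

theorem exists_isStrictNash (hs : Strict2 u1 u2) {T1 : Finset A} {T2 : Finset B}
    (h1 : T1.Nonempty) (h2 : T2.Nonempty) : ∃ a ∈ T1, ∃ d ∈ T2, IsStrictNash u1 u2 T1 T2 a d := by
  choose br hbr_mem hbr using hs.exists_best_row h1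
  let prefers (c e : B) : Prop := u2 (br c, c) < u2 (br c, e)
  have : IsStrictOrder B prefers :=
    { irrefl := fun _ => lt_irrefl _
      trans := fun _ _ _ => h.bestReply_trans hbr_mem hbr hs }
  obtain ⟨M, hM, hmax⟩ := T2.exists_forall_not_rel prefers h2
  exact ⟨br M, hbr_mem M, M, hM, hbr M,
    fun e he heM => (hs.u2_ne _ heM).lt_or_gt.resolve_right (hmax e he)⟩

theorem worst_row_or_worst_col_dominated (hs : Strict2 u1 u2) {T1 : Finset A} {T2 : Finset B}
    {a b : A} {d e : B} (hN : IsStrictNash u1 u2 T1 T2 a d) (hb : b ∈ T1) (he : e ∈ T2)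
    (hb_worst : ∀ x ∈ T1, x ≠ b → u1 (b, d) < u1 (x, d))
    (he_worst : ∀ y ∈ T2, y ≠ e → u2 (a, e) < u2 (a, y)) (hab : a ≠ b) (hde : d ≠ e) :
    (∀ y ∈ T2, u1 (b, y) < u1 (a, y)) ∨ ∀ x ∈ T1, u2 (x, e) < u2 (x, d) := by
  by_contra! ⟨⟨y, hy, hyb⟩, ⟨x, hx, hxe⟩⟩
  replace hyb := hyb.lt_of_ne (hs.u1_ne hab y)
  replace hxe := hxe.lt_of_ne (hs.u2_ne x hde)
  have hbd : u1 (b, d) < u1 (a, d) := hN.row_lt b hb hab.symm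
  have hae : u2 (a, e) < u2 (a, d) := hN.col_lt e he hde.symm
  have hyd : y ≠ d := by rintro rfl; linarith
  have hxa : x ≠ a := by rintro rfl; linarith
  have hay : u2 (a, y) < u2 (a, d) := hN.col_lt y hy hyd
  have hxd : u1 (x, d) < u1 (a, d) := hN.row_lt x hx hxa
  have hby : u2 (b, y) < u2 (b, d) := (h.u2_lt_iff_of_u1_cross hyb hbd).mp hay
  rcases (hs.u2_ne b hde).lt_or_gt with hbde | hbed
  · have hye : y ≠ e := by rintro rfl; linarith
    have hbe : u1 (b, e) < u1 (a, e) := (h.u1_lt_iff_of_u2_cross hbde hae).mp hbd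
    have hae' : u1 (a, e) < u1 (b, e) :=
      (h.u1_lt_iff_of_u2_cross (he_worst y hy hye) (hby.trans hbde)).mpr hyb
    exact lt_asymm hbe hae'
  have hxb : x ≠ b := by rintro rfl; linarith
  have hbx : u1 (b, d) < u1 (x, d) := hb_worst x hx hxb
  have hbxe : u1 (b, e) < u1 (x, e) := (h.u1_lt_iff_of_u2_cross hbed hxe).mpr hbx
  have hxae : u1 (x, e) < u1 (a, e) := (h.u1_lt_iff_of_u2_cross hxe hae).mp hxd
  have hye : y ≠ e := by rintro rfl; linarith
  have hey : u2 (a, e) < u2 (a, y) := he_worst y hy hye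
  -- Row `x` ranks `d` below `e` while rows `a` and `b` rank `d` above `y` above `e`, so some
  -- pair of columns crosses between `x` and both `a`, `b`: then `b < x < a` at `y`, against `hyb`.
  suffices u1 (b, y) < u1 (x, y) ∧ u1 (x, y) < u1 (a, y) from lt_asymm hyb (this.1.trans this.2)
  rcases (hs.u2_ne x hye).lt_or_gt with hxye | hxey
  · have hbey : u2 (b, e) < u2 (b, y) :=
      (h.u2_lt_iff_of_u1_cross (hbxe.trans hxae) hyb).mpr hey
    exact ⟨(h.u1_lt_iff_of_u2_cross hbey hxye).mp hbxe,
      (h.u1_lt_iff_of_u2_cross hxye hey).mpr hxae⟩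
  · exact ⟨(h.u1_lt_iff_of_u2_cross hby (hxe.trans hxey)).mpr hbx,
      (h.u1_lt_iff_of_u2_cross (hxe.trans hxey) hay).mp hxd⟩

theorem exists_dominated (hs : Strict2 u1 u2) {T1 : Finset A} {T2 : Finset B}
    (h1 : T1.Nonempty) (h2 : T2.Nonempty) (hbig : 1 < #T1 ∨ 1 < #T2) :
    (∃ b ∈ T1, ∃ a ∈ T1, ∀ y ∈ T2, u1 (b, y) < u1 (a, y)) ∨
      ∃ e ∈ T2, ∃ d ∈ T2, ∀ x ∈ T1, u2 (x, e) < u2 (x, d) := by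
  obtain ⟨a, ha, d, hd, hN⟩ := h.exists_isStrictNash hs h1 h2
  rcases le_or_gt #T2 1 with hT2 | hT2
  · obtain ⟨b, hb, hba⟩ := exists_mem_ne (hbig.resolve_right hT2.not_gt) a
    refine .inl ⟨b, hb, a, ha, fun y hy => ?_⟩
    rw [card_le_one.mp hT2 y hy d hd]
    exact hN.row_lt b hb hba
  rcases le_or_gt #T1 1 with hT1 | hT1
  · obtain ⟨e, he, hed⟩ := exists_mem_ne hT2 d
    refine .inr ⟨e, he, d, hd, fun x hx => ?_⟩
    rw [card_le_one.mp hT1 x hx a ha]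
    exact hN.col_lt e he hed
  obtain ⟨b, hb, hb_worst⟩ := hs.exists_worst_row h1 d
  obtain ⟨e, he, he_worst⟩ := hs.exists_worst_col h2 a
  have hab : a ≠ b := by
    rintro rfl
    obtain ⟨x, hx, hxa⟩ := exists_mem_ne hT1 a
    exact lt_asymm (hN.row_lt x hx hxa) (hb_worst x hx hxa)
  have hde : d ≠ e := by
    rintro rfl
    obtain ⟨y, hy, hyd⟩ := exists_mem_ne hT2 d
    exact lt_asymm (hN.col_lt y hy hyd) (he_worst y hy hyd)
  rcases h.worst_row_or_worst_col_dominated hs hN hb he hb_worst he_worst hab hde with hrow | hcol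
  exacts [.inl ⟨b, hb, a, ha, hrow⟩, .inr ⟨e, he, d, hd, hcol⟩]

variable [DecidableEq A] [DecidableEq B]

theorem exists_deletionStep (hs : Strict2 u1 u2) {T : Finset A × Finset B}
    (h1 : T.1.Nonempty) (h2 : T.2.Nonempty) (hbig : 1 < #T.1 ∨ 1 < #T.2) :
    ∃ T', DeletionStep u1 u2 T T' ∧ T'.1.Nonempty ∧ T'.2.Nonempty ∧
      #T'.1 + #T'.2 < #T.1 + #T.2 := by
  rcases h.exists_dominated hs h1 h2 hbig with ⟨b, hb, a, ha, hdom⟩ | ⟨e, he, d, hd, hdom⟩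
  · have hab : a ≠ b := by rintro rfl; exact lt_irrefl _ (hdom _ h2.choose_spec)
    refine ⟨(T.1.erase b, T.2), .inl ⟨b, hb, ⟨a, ha, hdom⟩, rfl, rfl⟩,
      ⟨a, mem_erase.2 ⟨hab, ha⟩⟩, h2, ?_⟩
    have := card_erase_lt_of_mem hb
    dsimp only
    omega
  · have hde : d ≠ e := by rintro rfl; exact lt_irrefl _ (hdom _ h1.choose_spec)
    refine ⟨(T.1, T.2.erase e), .inr ⟨e, he, ⟨d, hd, hdom⟩, rfl, rfl⟩,
      h1, ⟨d, mem_erase.2 ⟨hde, hd⟩⟩, ?_⟩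
    have := card_erase_lt_of_mem he
    dsimp only
    omega

theorem exists_reflTransGen_deletionStep (hs : Strict2 u1 u2) (T : Finset A × Finset B)
    (h1 : T.1.Nonempty) (h2 : T.2.Nonempty) :
    ∃ S, ReflTransGen (DeletionStep u1 u2) T S ∧ #S.1 = 1 ∧ #S.2 = 1 := by
  by_cases hone : #T.1 = 1 ∧ #T.2 = 1
  · exact ⟨T, .refl, hone⟩
  have hbig : 1 < #T.1 ∨ 1 < #T.2 := by
    have := h1.card_pos
    have := h2.card_pos
    omega
  obtain ⟨T', hstep, h1', h2', hlt⟩ := h.exists_deletionStep hs h1 h2 hbig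
  obtain ⟨S, hS, hS_card⟩ := exists_reflTransGen_deletionStep hs T' h1' h2'
  exact ⟨S, .head hstep hS, hS_card⟩
termination_by #T.1 + #T.2

end DominanceSolvable2x2

end

/-- If every 2×2 subgame of a strict two-player finite game is dominance-solvable
(i.e. in every 2×2 subgame some strategy is strictly dominated within that subgame),
then the game is dominance-solvable. -/
theorem dominance_solvable_of_2x2_dominance_solvable {A B : Type*}
    [Fintype A] [Fintype B] [DecidableEq A] [DecidableEq B] [Nonempty A] [Nonempty B]
    (u1 u2 : A × B → ℝ) (hs : Strict2 u1 u2)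
    (h2x2 : ∀ a b : A, ∀ c d : B, a ≠ b → c ≠ d →
      (u1 (a, c) < u1 (b, c) ∧ u1 (a, d) < u1 (b, d)) ∨
      (u1 (b, c) < u1 (a, c) ∧ u1 (b, d) < u1 (a, d)) ∨
      (u2 (a, c) < u2 (a, d) ∧ u2 (b, c) < u2 (b, d)) ∨
      (u2 (a, d) < u2 (a, c) ∧ u2 (b, d) < u2 (b, c))) :
    DominanceSolvable u1 u2 :=
  DominanceSolvable2x2.exists_reflTransGen_deletionStep h2x2 hs _ univ_nonempty univ_nonempty
end

section
/- If every 2×2 subgame of a strict two-player zero-sum finite game has a pure Nash equilibrium (within that subgame), then the game is dominance-solvable. -/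
/-- `p` is a pure Nash equilibrium of the 2×2 subgame on strategies `{a, b}` for
player 1 and `{c, d}` for player 2. -/
def IsSubgamePNE2x2 {A B : Type*} (u1 u2 : A × B → ℝ) (a b : A) (c d : B)
    (p : A × B) : Prop :=
  (p.1 = a ∨ p.1 = b) ∧ (p.2 = c ∨ p.2 = d) ∧
    ∀ q : A × B, (q.1 = a ∨ q.1 = b) → (q.2 = c ∨ q.2 = d) →
      (IComp1 p q → u1 q ≤ u1 p) ∧ (IComp2 p q → u2 q ≤ u2 p)

/-!
Shapley's argument. Write `u = u₁ = -u₂`. In a strict zero-sum game, a 2×2 subgame without a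
pure equilibrium is exactly an improvement cycle, so the hypothesis forbids such cycles. Let
`(a, c)` maximize `u` on the current subgame and let `b ≠ a` minimize `u (·, c)`. If row `a`
does not dominate row `b`, some column `e` has `u (a, e) < u (b, e)`; if column `e` does not
dominate column `c` for player 2, some row `r` has `u (r, c) < u (r, e)`. Excluding the cycles
through `(a, c)` then gives `u (r, c) < u (r, e) ≤ u (a, e) < u (b, e) ≤ u (b, c)`, contradicting
the choice of `b`. So some strategy can always be deleted until one profile is left.
-/

open Finset

section

variable {A B : Type*} {u1 u2 : A × B → ℝ}

theorem Strict2.u1_ne_s12 (hs : Strict2 u1 u2) {a b : A} (c : B) (h : a ≠ b) :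
    u1 (a, c) ≠ u1 (b, c) :=
  hs.1 _ _ ⟨h, rfl⟩

theorem Strict2.u2_ne_s12 (hs : Strict2 u1 u2) (a : A) {c d : B} (h : c ≠ d) :
    u2 (a, c) ≠ u2 (a, d) :=
  hs.2 _ _ ⟨rfl, h⟩

/-- `(a, c) → (a, e) → (b, e) → (b, c) → (a, c)` is an improvement cycle. -/
theorem ZeroSum2.not_cycle (hz : ZeroSum2 u1 u2) {a b : A} {c e : B} (hab : a ≠ b)
    (hce : c ≠ e) (hpne : ∃ p, IsSubgamePNE2x2 u1 u2 a b c e p)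
    (hbc : u1 (b, c) < u1 (a, c)) (hae : u1 (a, e) < u1 (a, c))
    (hbe : u1 (a, e) < u1 (b, e)) (hcb : u1 (b, c) < u1 (b, e)) : False := by
  obtain ⟨⟨x, y⟩, hx, hy, hdev⟩ := hpne
  rcases hx with rfl | rfl <;> rcases hy with rfl | rfl
  · linarith [(hdev (x, e) (.inl rfl) (.inr rfl)).2 ⟨rfl, hce⟩, hz (x, y), hz (x, e)]
  · linarith [(hdev (b, y) (.inr rfl) (.inr rfl)).1 ⟨hab, rfl⟩]
  · linarith [(hdev (a, y) (.inl rfl) (.inl rfl)).1 ⟨hab.symm, rfl⟩]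
  · linarith [(hdev (x, c) (.inr rfl) (.inl rfl)).2 ⟨rfl, hce.symm⟩, hz (x, y), hz (x, c)]

variable [DecidableEq A] [DecidableEq B] {T T' : Finset A × Finset B}

theorem DeletionStep.card_lt (h : DeletionStep u1 u2 T T') :
    T'.1.card + T'.2.card < T.1.card + T.2.card := by
  rcases h with ⟨t, ht, -, h1, h2⟩ | ⟨t, ht, -, h1, h2⟩ <;>
  · rw [h1, h2]
    have := card_erase_lt_of_mem ht
    omega

theorem DeletionStep.nonempty (h : DeletionStep u1 u2 T T') (h1 : T.1.Nonempty)
    (h2 : T.2.Nonempty) : T'.1.Nonempty ∧ T'.2.Nonempty := by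
  rcases h with ⟨t, -, ⟨s, hs, hdom⟩, h1', h2'⟩ | ⟨t, -, ⟨s, hs, hdom⟩, h1', h2'⟩
  · obtain ⟨r, hr⟩ := h2
    have hst : s ≠ t := fun hst => (hdom r hr).ne (by rw [hst])
    exact ⟨h1' ▸ ⟨s, mem_erase.2 ⟨hst, hs⟩⟩, h2' ▸ ⟨r, hr⟩⟩
  · obtain ⟨r, hr⟩ := h1
    have hst : s ≠ t := fun hst => (hdom r hr).ne (by rw [hst])
    exact ⟨h1' ▸ ⟨r, hr⟩, h2' ▸ ⟨s, mem_erase.2 ⟨hst, hs⟩⟩⟩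

theorem exists_reflTransGen_deletionStep_card_eq_one
    (hstep : ∀ T : Finset A × Finset B, T.1.Nonempty → T.2.Nonempty →
      1 < T.1.card ∨ 1 < T.2.card → ∃ T', DeletionStep u1 u2 T T')
    (T : Finset A × Finset B) (h1 : T.1.Nonempty) (h2 : T.2.Nonempty) :
    ∃ T', Relation.ReflTransGen (DeletionStep u1 u2) T T' ∧ T'.1.card = 1 ∧ T'.2.card = 1 := by
  induction hn : T.1.card + T.2.card using Nat.strong_induction_on generalizing T with
  | _ n ih =>
    by_cases hcard : 1 < T.1.card ∨ 1 < T.2.card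
    · obtain ⟨T', hT'⟩ := hstep T h1 h2 hcard
      obtain ⟨h1', h2'⟩ := hT'.nonempty h1 h2
      obtain ⟨T'', hT'', hc1, hc2⟩ := ih _ (hn ▸ hT'.card_lt) T' h1' h2' rfl
      exact ⟨T'', .head hT' hT'', hc1, hc2⟩
    · have := card_pos.2 h1
      have := card_pos.2 h2
      exact ⟨T, .refl, by omega, by omega⟩

theorem exists_deletionStep_of_card_fst_eq_one (hs : Strict2 u1 u2) (h1 : T.1.card = 1)
    (h2 : 1 < T.2.card) : ∃ T', DeletionStep u1 u2 T T' := by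
  obtain ⟨a, ha⟩ := card_eq_one.1 h1
  obtain ⟨c, hc, hmax⟩ := exists_max_image T.2 (fun d => u2 (a, d)) (card_pos.1 (by omega))
  obtain ⟨d, hd, hdc⟩ := exists_mem_ne h2 c
  refine ⟨(T.1, T.2.erase d), .inr ⟨d, hd, ⟨c, hc, fun r hr => ?_⟩, rfl, rfl⟩⟩
  rw [ha, mem_singleton] at hr
  subst hr
  exact (hmax d hd).lt_of_ne (hs.u2_ne_s12 r hdc)

theorem exists_deletionStep_of_one_lt_card_fst (hz : ZeroSum2 u1 u2) (hs : Strict2 u1 u2)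
    (h2x2 : ∀ a b : A, ∀ c d : B, a ≠ b → c ≠ d →
      ∃ p : A × B, IsSubgamePNE2x2 u1 u2 a b c d p)
    (h1 : 1 < T.1.card) (h2 : T.2.Nonempty) : ∃ T', DeletionStep u1 u2 T T' := by
  obtain ⟨⟨a, c⟩, hac, hmax⟩ :=
    exists_max_image (T.1 ×ˢ T.2) u1 ((card_pos.1 (by omega)).product h2)
  obtain ⟨ha, hc⟩ := mem_product.1 hac
  have hcol_max : ∀ r ∈ T.1, r ≠ a → u1 (r, c) < u1 (a, c) := fun r hr hra =>
    (hmax (r, c) (mem_product.2 ⟨hr, hc⟩)).lt_of_ne (hs.u1_ne_s12 c hra)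
  have hrow_max : ∀ e ∈ T.2, e ≠ c → u1 (a, e) < u1 (a, c) := fun e he hec =>
    (hmax (a, e) (mem_product.2 ⟨ha, he⟩)).lt_of_ne fun h =>
      hs.u2_ne_s12 a hec (by linarith [hz (a, e), hz (a, c)])
  obtain ⟨b, hb, hmin⟩ := exists_min_image (T.1.erase a) (fun r => u1 (r, c))
    (by rw [← card_pos, card_erase_of_mem ha]; omega)
  obtain ⟨hba, hb⟩ := mem_erase.1 hb
  by_cases hrow : ∀ e ∈ T.2, u1 (b, e) < u1 (a, e)
  · exact ⟨(T.1.erase b, T.2), .inl ⟨b, hb, ⟨a, ha, hrow⟩, rfl, rfl⟩⟩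
  push Not at hrow
  obtain ⟨e, he, hbe⟩ := hrow
  replace hbe := hbe.lt_of_ne (hs.u1_ne_s12 e hba.symm)
  have hec : e ≠ c := by
    rintro rfl
    linarith [hcol_max b hb hba]
  by_cases hcol : ∀ r ∈ T.1, u2 (r, c) < u2 (r, e)
  · exact ⟨(T.1, T.2.erase c), .inr ⟨c, hc, ⟨e, he, hcol⟩, rfl, rfl⟩⟩
  push Not at hcol
  obtain ⟨r, hr, hre⟩ := hcol
  replace hre : u1 (r, c) < u1 (r, e) := by
    linarith [hre.lt_of_ne (hs.u2_ne_s12 r hec), hz (r, c), hz (r, e)]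
  have hra : r ≠ a := by
    rintro rfl
    linarith [hrow_max e he hec]
  have hbe' : u1 (b, e) ≤ u1 (b, c) := le_of_not_gt fun h =>
    hz.not_cycle hba.symm hec.symm (h2x2 a b c e hba.symm hec.symm) (hcol_max b hb hba)
      (hrow_max e he hec) hbe h
  have hre' : u1 (r, e) ≤ u1 (a, e) := le_of_not_gt fun h =>
    hz.not_cycle hra.symm hec.symm (h2x2 a r c e hra.symm hec.symm) (hcol_max r hr hra)
      (hrow_max e he hec) h hre
  linarith [hmin r (mem_erase.2 ⟨hra, hr⟩)]

end

/-- Shapley's theorem: if every 2×2 subgame of a strict two-player zero-sum finite game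
has a pure Nash equilibrium (within that subgame), then the game is dominance-solvable. -/
theorem zero_sum_dominance_solvable_of_2x2_pne {A B : Type*}
    [Fintype A] [Fintype B] [DecidableEq A] [DecidableEq B] [Nonempty A] [Nonempty B]
    (u1 u2 : A × B → ℝ) (hz : ZeroSum2 u1 u2) (hs : Strict2 u1 u2)
    (h2x2 : ∀ a b : A, ∀ c d : B, a ≠ b → c ≠ d →
      ∃ p : A × B, IsSubgamePNE2x2 u1 u2 a b c d p) :
    DominanceSolvable u1 u2 := by
  refine exists_reflTransGen_deletionStep_card_eq_one (fun T h1 h2 hcard => ?_)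
    (univ, univ) univ_nonempty univ_nonempty
  by_cases hT1 : 1 < T.1.card
  · exact exists_deletionStep_of_one_lt_card_fst hz hs h2x2 hT1 h2
  · have := card_pos.2 h1
    exact exists_deletionStep_of_card_fst_eq_one hs (by omega) (hcard.resolve_left hT1)
end

section
/- In the preference graph of a strict two-player finite game, every directed cycle of minimum length (among all directed cycles, assuming at least one exists) has even length, and its arcs alternate between deviations of player 1 and deviations of player 2 (no two consecutive arcs of the cycle correspond to the same player). -/
/-- If a cycle of length `m + 3` has a chord from `f k` to `f (k + 2)`, then there is
a cycle of length `m + 2`. -/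
lemma shorter_cycle {A B : Type*} (u1 u2 : A × B → ℝ) (m : ℕ)
    (f : Fin (m + 1 + 2) → A × B) (hinj : Function.Injective f)
    (hcyc : ∀ k : Fin (m + 1 + 2), Arc2 u1 u2 (f k) (f (k + 1)))
    (k : Fin (m + 1 + 2)) (harc : Arc2 u1 u2 (f k) (f (k + 1 + 1))) :
    ∃ g : Fin (m + 2) → A × B, Function.Injective g ∧
      (∀ j : Fin (m + 2), Arc2 u1 u2 (g j) (g (j + 1))) := by
  classical
  set f' : Fin (m + 1 + 2) → A × B := fun j => f (k + j) with hf'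
  have hf'inj : Function.Injective f' := fun a b h => add_left_cancel (hinj h)
  have hcyc' : ∀ j, Arc2 u1 u2 (f' j) (f' (j + 1)) := fun j => by
    simpa [hf', add_assoc] using hcyc (k + j)
  have harc' : Arc2 u1 u2 (f' 0) (f' 2) := by
    have h11 : (1 + 1 : Fin (m + 1 + 2)) = 2 := Fin.ext (by simp [Fin.val_add])
    simpa [hf', add_assoc, h11] using harc
  set emb : Fin (m + 2) → Fin (m + 1 + 2) := fun j =>
    if j = 0 then 0 else ⟨j.val + 1, by omega⟩ with hemb
  have hvemb : ∀ i : Fin (m + 2), i ≠ 0 → (emb i).val = i.val + 1 := by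
    intro i hi; simp [hemb, hi]
  have hvemb0 : emb 0 = 0 := by simp [hemb]
  have hembinj : Function.Injective emb := by
    intro a b h
    have hv := congrArg Fin.val h
    by_cases ha : a = 0 <;> by_cases hb : b = 0
    · rw [ha, hb]
    · rw [ha, hvemb0] at hv; rw [hvemb b hb] at hv; simp at hv
    · rw [hb, hvemb0] at hv; rw [hvemb a ha] at hv; simp at hv
    · rw [hvemb a ha, hvemb b hb] at hv; exact Fin.ext (by omega)
  refine ⟨f' ∘ emb, hf'inj.comp hembinj, ?_⟩
  intro j
  by_cases hj0 : j = 0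
  · subst hj0
    have h1 : (0 + 1 : Fin (m + 2)) = 1 := by rw [zero_add]
    have h2 : emb 1 = 2 := by
      apply Fin.ext
      rw [hvemb 1 (by simp [Fin.ext_iff])]
      simp [Fin.val_one]
      rw [Nat.mod_eq_of_lt (by omega)]
    simpa [Function.comp, h1, h2, hvemb0] using harc'
  · by_cases hjl : j = Fin.last (m + 1)
    · subst hjl
      have h1 : (Fin.last (m + 1) + 1 : Fin (m + 2)) = 0 := Fin.last_add_one _
      have h2 : emb (Fin.last (m + 1)) = Fin.last (m + 2) := by
        apply Fin.ext
        rw [hvemb _ (by simp [Fin.ext_iff, Fin.last])]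
        simp [Fin.last]
      have := hcyc' (Fin.last (m + 2))
      rw [Fin.last_add_one] at this
      simpa [Function.comp, h1, h2, hvemb0] using this
    · have hjv : j.val ≠ 0 := fun h => hj0 (Fin.ext h)
      have hjv' : j.val < m + 1 := by
        rcases Nat.lt_or_ge j.val (m + 1) with h | h
        · exact h
        · exact absurd (Fin.ext (by have := j.isLt; omega : j.val = m + 1)) hjl
      have hadd : (j + 1 : Fin (m + 2)).val = j.val + 1 := by
        rw [Fin.val_add_one, if_neg hjl]
      have hj1ne : (j + 1 : Fin (m + 2)) ≠ 0 := by
        intro h; have := congrArg Fin.val h; rw [hadd] at this; simp at this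
      have hembne : emb j ≠ Fin.last (m + 2) := by
        intro h; have := congrArg Fin.val h
        rw [hvemb j hj0] at this; simp [Fin.last] at this; omega
      have h2 : emb (j + 1) = emb j + 1 := by
        apply Fin.ext
        rw [hvemb _ hj1ne, hadd, Fin.val_add_one, if_neg hembne, hvemb j hj0]
      have := hcyc' (emb j)
      simpa [Function.comp, h2] using this

/-- In the preference graph of a strict two-player finite game, every directed cycle of
minimum length has even length, and its arcs alternate between deviations of player 1
and deviations of player 2. -/
theorem min_cycle_even_and_alternating {A B : Type*}
    [Fintype A] [Fintype B] [Nonempty A] [Nonempty B]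
    (u1 u2 : A × B → ℝ) (hs : Strict2 u1 u2)
    (n : ℕ) (f : Fin (n + 2) → A × B) (hinj : Function.Injective f)
    (hcyc : ∀ k : Fin (n + 2), Arc2 u1 u2 (f k) (f (k + 1)))
    (hmin : ∀ (m : ℕ) (g : Fin (m + 2) → A × B), Function.Injective g →
      (∀ k : Fin (m + 2), Arc2 u1 u2 (g k) (g (k + 1))) → n ≤ m) :
    Even (n + 2) ∧
      ∀ k : Fin (n + 2),
        ¬(IComp1 (f k) (f (k + 1)) ∧ IComp1 (f (k + 1)) (f (k + 1 + 1))) ∧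
        ¬(IComp2 (f k) (f (k + 1)) ∧ IComp2 (f (k + 1)) (f (k + 1 + 1))) := by
  classical
  have excl : ∀ p q : A × B, IComp1 p q → IComp2 p q → False :=
    fun p q h1 h2 => h2.2 h1.2
  -- no cycle of length 2
  rcases n with _ | m
  · exfalso
    have h01 := hcyc 0
    have h10 := hcyc 1
    have e1 : (0 + 1 : Fin 2) = 1 := by decide
    have e2 : (1 + 1 : Fin 2) = 0 := by decide
    rw [e1] at h01; rw [e2] at h10
    rcases h01 with ⟨hc, hlt⟩ | ⟨hc, hlt⟩ <;> rcases h10 with ⟨hc', hlt'⟩ | ⟨hc', hlt'⟩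
    · linarith
    · exact hc'.2 hc.2.symm
    · exact hc.2 hc'.2.symm
    · linarith
  -- now n = m + 1, cycle length m + 3
  have hne2 : ∀ k : Fin (m + 1 + 2), f k ≠ f (k + 1 + 1) := by
    intro k h
    have heq := hinj h
    rw [add_assoc k 1 1] at heq
    have h0 : k + 0 = k + (1 + 1) := by rw [add_zero]; exact heq
    have h02 : (0 : Fin (m + 1 + 2)) = 1 + 1 := add_left_cancel h0
    have hv := congrArg Fin.val h02
    rw [Fin.val_zero, Fin.val_add, Fin.val_one, Nat.mod_eq_of_lt (by omega)] at hv
    omega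
  have getu1 : ∀ k : Fin (m + 1 + 2), IComp1 (f k) (f (k + 1)) →
      u1 (f k) < u1 (f (k + 1)) := by
    intro k h
    rcases hcyc k with ⟨_, hlt⟩ | ⟨hc, _⟩
    · exact hlt
    · exact absurd (excl _ _ h hc) id
  have getu2 : ∀ k : Fin (m + 1 + 2), IComp2 (f k) (f (k + 1)) →
      u2 (f k) < u2 (f (k + 1)) := by
    intro k h
    rcases hcyc k with ⟨hc, _⟩ | ⟨_, hlt⟩
    · exact absurd (excl _ _ hc h) id
    · exact hlt
  have alt : ∀ k : Fin (m + 1 + 2),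
      ¬(IComp1 (f k) (f (k + 1)) ∧ IComp1 (f (k + 1)) (f (k + 1 + 1))) ∧
      ¬(IComp2 (f k) (f (k + 1)) ∧ IComp2 (f (k + 1)) (f (k + 1 + 1))) := by
    intro k
    constructor
    · rintro ⟨h1, h2⟩
      have harc : Arc2 u1 u2 (f k) (f (k + 1 + 1)) := by
        left
        refine ⟨⟨?_, h1.2.trans h2.2⟩, (getu1 k h1).trans (getu1 (k + 1) h2)⟩
        intro h
        exact hne2 k (Prod.ext h (h1.2.trans h2.2))
      obtain ⟨g, ginj, garc⟩ := shorter_cycle u1 u2 m f hinj hcyc k harc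
      have := hmin m g ginj garc
      omega
    · rintro ⟨h1, h2⟩
      have harc : Arc2 u1 u2 (f k) (f (k + 1 + 1)) := by
        right
        refine ⟨⟨h1.1.trans h2.1, ?_⟩, (getu2 k h1).trans (getu2 (k + 1) h2)⟩
        intro h
        exact hne2 k (Prod.ext (h1.1.trans h2.1) h)
      obtain ⟨g, ginj, garc⟩ := shorter_cycle u1 u2 m f hinj hcyc k harc
      have := hmin m g ginj garc
      omega
  refine ⟨?_, alt⟩
  -- evenness from alternation
  have flip : ∀ k : Fin (m + 1 + 2),
      IComp1 (f (k + 1)) (f (k + 1 + 1)) ↔ ¬ IComp1 (f k) (f (k + 1)) := by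
    intro k
    constructor
    · intro h' h
      exact (alt k).1 ⟨h, h'⟩
    · intro h
      by_contra h'
      have hc : IComp2 (f k) (f (k + 1)) := by
        rcases hcyc k with ⟨hc, _⟩ | ⟨hc, _⟩
        · exact absurd hc h
        · exact hc
      have hc' : IComp2 (f (k + 1)) (f (k + 1 + 1)) := by
        rcases hcyc (k + 1) with ⟨hc', _⟩ | ⟨hc', _⟩
        · exact absurd hc' h'
        · exact hc'
      exact (alt k).2 ⟨hc, hc'⟩
  open Fin.NatCast in
  have key : ∀ j : ℕ,
      (IComp1 (f (j : Fin (m + 1 + 2))) (f ((j : Fin (m + 1 + 2)) + 1)) ↔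
        (Even j ↔ IComp1 (f (0 : Fin (m + 1 + 2))) (f ((0 : Fin (m + 1 + 2)) + 1)))) := by
    intro j
    induction j with
    | zero => simp only [Nat.cast_zero]; tauto
    | succ j ih =>
      have hc : ((j + 1 : ℕ) : Fin (m + 1 + 2)) = (j : Fin (m + 1 + 2)) + 1 := by
        push_cast; ring
      rw [hc, flip (j : Fin (m + 1 + 2)), ih, Nat.even_add_one]
      tauto
  have hkey := key (m + 1 + 2)
  open Fin.NatCast in
  rw [show ((m + 1 + 2 : ℕ) : Fin (m + 1 + 2)) = 0 from Fin.natCast_self _] at hkey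
  by_cases h0 : IComp1 (f (0 : Fin (m + 1 + 2))) (f ((0 : Fin (m + 1 + 2)) + 1)) <;> tauto
end

section
/- In a strict finite normal-form game, every sink equilibrium C of the preference graph contains a sink equilibrium of the best-response graph: there exists a strongly connected component C' of the best-response graph with no outgoing best-response arcs such that C' ⊆ C. Consequently the best-response graph has at least as many sink equilibria as the preference graph. -/
open Function

/-- Arc of the best-response graph: the subgraph of the preference graph whose arcs
`p → q` (for `i`-comparable `p, q`) satisfy `u i q ≥ u i (s; p₋ᵢ)` for all `s`. -/
def BRArc {N : ℕ} {S : Fin N → Type*} (u : Fin N → (∀ j, S j) → ℝ)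
    (p q : ∀ j, S j) : Prop :=
  ∃ i, IComp i p q ∧ u i p < u i q ∧ ∀ s : S i, u i (update p i s) ≤ u i q

/-! The best-response graph is a subgraph of the preference graph, so a sink equilibrium `C` of
the preference graph is a finite nonempty set closed under best-response arcs. Any such set
contains a sink equilibrium: the set of nodes reachable from a node of `C` whose reachable set is
minimal. Distinct sink equilibria of the preference graph are disjoint, so choosing one
best-response sink equilibrium inside each of them is injective. -/

open Relation

section SinkEquilibrium

variable {α : Type*} {A B : α → α → Prop} {C D : Set α}

theorem mem_of_reflTransGen_of_forall_mem (hC : ∀ p ∈ C, ∀ q, A p q → q ∈ C) {p q : α}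
    (hp : p ∈ C) (hpq : ReflTransGen A p q) : q ∈ C := by
  induction hpq with
  | refl => exact hp
  | tail _ hab ih => exact hC _ ih _ hab

theorem exists_isSinkEqG_subset (hfin : C.Finite) (hne : C.Nonempty)
    (hC : ∀ p ∈ C, ∀ q, A p q → q ∈ C) : ∃ C' ⊆ C, IsSinkEqG A C' := by
  obtain ⟨q, hqC, hmin⟩ := hfin.exists_minimalFor (fun p => {r | ReflTransGen A p r}) C hne
  have hreach_sub : {r | ReflTransGen A q r} ⊆ C := fun _ =>
    mem_of_reflTransGen_of_forall_mem hC hqC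
  have hback : ∀ r, ReflTransGen A q r → ReflTransGen A r q := fun r hqr =>
    hmin (hreach_sub hqr) (fun _ hrs => hqr.trans hrs) ReflTransGen.refl
  refine ⟨{r | ReflTransGen A q r}, hreach_sub, ⟨q, ReflTransGen.refl⟩, ?_, ?_⟩
  · exact fun p hqp r hpr => hqp.tail hpr
  · exact fun r hqr s hqs => (hback r hqr).trans hqs

theorem IsSinkEqG.subset_of_mem (hC : IsSinkEqG A C) (hD : IsSinkEqG A D) {x : α}
    (hxC : x ∈ C) (hxD : x ∈ D) : C ⊆ D := fun _ hy =>
  mem_of_reflTransGen_of_forall_mem hD.2.1 hxD (hC.2.2 x hxC _ hy)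

theorem IsSinkEqG.exists_subset_of_le (hC : IsSinkEqG B C) (hfin : C.Finite)
    (hAB : A ≤ B) : ∃ C' ⊆ C, IsSinkEqG A C' :=
  exists_isSinkEqG_subset hfin hC.1 fun p hp q hpq => hC.2.1 p hp q (hAB p q hpq)

theorem card_isSinkEqG_le_of_le [Finite α] (hAB : A ≤ B) :
    Nat.card {C : Set α // IsSinkEqG B C} ≤ Nat.card {C : Set α // IsSinkEqG A C} := by
  have hsub : ∀ C : {C : Set α // IsSinkEqG B C},
      ∃ C' : {C : Set α // IsSinkEqG A C}, C'.1 ⊆ C.1 := fun C => by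
    obtain ⟨C', hC'C, hC'⟩ := C.2.exists_subset_of_le C.1.toFinite hAB
    exact ⟨⟨C', hC'⟩, hC'C⟩
  choose f hf using hsub
  refine Nat.card_le_card_of_injective f fun C D hCD => ?_
  obtain ⟨x, hx⟩ := (f C).2.1
  have hxC : x ∈ C.1 := hf C hx
  have hxD : x ∈ D.1 := hf D (hCD ▸ hx)
  exact Subtype.ext ((C.2.subset_of_mem D.2 hxC hxD).antisymm (D.2.subset_of_mem C.2 hxD hxC))

end SinkEquilibrium

theorem brArc_le_prefArc {N : ℕ} {S : Fin N → Type*} (u : Fin N → (∀ j, S j) → ℝ) :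
    BRArc u ≤ PrefArc u := fun _ _ ⟨i, hi, hlt, _⟩ => ⟨i, hi, hlt⟩

theorem sink_equilibrium_contains_br_sink_equilibrium_general {N : ℕ} {S : Fin N → Type*}
    [∀ i, Fintype (S i)]
    (u : Fin N → (∀ j, S j) → ℝ) :
    (∀ C : Set (∀ j, S j), IsSinkEqG (PrefArc u) C →
      ∃ C' : Set (∀ j, S j), IsSinkEqG (BRArc u) C' ∧ C' ⊆ C) ∧
    Nat.card {C : Set (∀ j, S j) // IsSinkEqG (PrefArc u) C} ≤
      Nat.card {C : Set (∀ j, S j) // IsSinkEqG (BRArc u) C} := by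
  refine ⟨fun C hC => ?_, card_isSinkEqG_le_of_le (brArc_le_prefArc u)⟩
  obtain ⟨C', hC'C, hC'⟩ := hC.exists_subset_of_le C.toFinite (brArc_le_prefArc u)
  exact ⟨C', hC', hC'C⟩

/-- In a strict finite game, every sink equilibrium of the preference graph contains a
sink equilibrium of the best-response graph; consequently the best-response graph has at
least as many sink equilibria as the preference graph. -/
theorem sink_equilibrium_contains_br_sink_equilibrium {N : ℕ} {S : Fin N → Type*}
    [∀ i, Fintype (S i)] [∀ i, Nonempty (S i)]
    (u : Fin N → (∀ j, S j) → ℝ) (hu : StrictGame u) :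
    (∀ C : Set (∀ j, S j), IsSinkEqG (PrefArc u) C →
      ∃ C' : Set (∀ j, S j), IsSinkEqG (BRArc u) C' ∧ C' ⊆ C) ∧
    Nat.card {C : Set (∀ j, S j) // IsSinkEqG (PrefArc u) C} ≤
      Nat.card {C : Set (∀ j, S j) // IsSinkEqG (BRArc u) C} :=
  sink_equilibrium_contains_br_sink_equilibrium_general u
end
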